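/- arXiv:2001.02388 — 7 statements merged into one kernel-verified Lean document; each statement's English description precedes it below -/
import Mathlib

section
/- Let μ = (μ_1,…,μ_m) be an m-partition of n, and let F ∈ ℂ[x] have degree n, exactly m distinct complex roots, and roots α_1,…,α_n listed with multiplicity. Then mult(F) = μ if and only if the permanent of the n×n matrix whose (i,j)-entry is F^{(p_i)}(α_j)/p_i! is nonzero. -/
open Polynomial Finset Equiv

/-- The `n`-tuple `p = (μ_1 repeated μ_1 times, …, μ_m repeated μ_m times)`
associated with an `m`-partition `μ` of `n`. -/
def pTuple {m : ℕ} (μ : Fin m → ℕ) (n : ℕ) : Fin n → ℕ := fun i =>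
  ((List.ofFn μ).flatMap fun a => List.replicate a a).getD (i : ℕ) 0

/-- `mult F = μ`: the multiset of multiplicities of the distinct roots of `F` equals the
multiset of entries of `μ` (equivalently, since `μ_1 ≥ … ≥ μ_m`, the tuple of
multiplicities sorted in decreasing order is `(μ_1, …, μ_m)`). -/
def multEq {m : ℕ} (F : Polynomial ℂ) (μ : Fin m → ℕ) : Prop :=
  (F.roots.toFinset.val.map fun r => rootMultiplicity r F) = Finset.univ.val.map μ

/-!
The entry `F^{(k)}(α_j) / k!` vanishes for `k < q_j := mult(α_j)` and not for `k = q_j`.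
As multisets, `p` and `q` both list every part `a` of a partition `a` times (the parts of `μ`,
resp. the multiplicities of `F`), so `∑ 1/p_i = m = ∑ 1/q_j`. A permutation `σ` with a nonzero
term satisfies `q_j ≤ p_{σ j}` for all `j`, and the equal reciprocal sums force `p ∘ σ = q`.
All these terms are the same nonzero product, so the permanent is nonzero iff `p` is a
rearrangement of `q`, which happens iff `mult F = μ`, because listing every part `a` of a
multiset of positive integers `a` times is injective.
-/

namespace Multiset

theorem count_bind_replicate_self (X : Multiset ℕ) (a : ℕ) :
    (X.bind fun b => replicate b b).count a = a * X.count a := by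
  induction X using Multiset.induction_on with
  | empty => simp
  | cons b X ih =>
    rw [cons_bind, count_add, ih, count_replicate, count_cons]
    rcases eq_or_ne b a with rfl | h
    · rw [if_pos rfl, if_pos rfl]
      ring
    · rw [if_neg h, if_neg h.symm]
      ring

theorem bind_replicate_self_inj {X Y : Multiset ℕ} (hX : 0 ∉ X) (hY : 0 ∉ Y) :
    (X.bind fun a => replicate a a) = Y.bind (fun a => replicate a a) ↔ X = Y := by
  refine ⟨fun h => ext.mpr fun a => ?_, fun h => h ▸ rfl⟩
  rcases Nat.eq_zero_or_pos a with rfl | ha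
  · rw [count_eq_zero.mpr hX, count_eq_zero.mpr hY]
  · have := congrArg (count a) h
    rw [count_bind_replicate_self, count_bind_replicate_self] at this
    exact Nat.eq_of_mul_eq_mul_left ha this

theorem sum_map_inv_bind_replicate_self {X : Multiset ℕ} (hX : 0 ∉ X) :
    ((X.bind fun a => replicate a a).map fun x : ℕ => (x : ℚ)⁻¹).sum = card X := by
  induction X using Multiset.induction_on with
  | empty => simp
  | cons b X ih =>
    rw [mem_cons, not_or] at hX
    rw [cons_bind, map_add, sum_add, ih hX.2, map_replicate, sum_replicate, nsmul_eq_mul,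
      mul_inv_cancel₀ (Nat.cast_ne_zero.mpr (Ne.symm hX.1)), card_cons]
    push_cast
    ring

theorem map_count_eq_bind_replicate {α : Type*} [DecidableEq α] (s : Multiset α) :
    s.map (s.count ·) = (s.toFinset.val.map (s.count ·)).bind fun a => replicate a a := by
  have hs : s = s.toFinset.val.bind fun a => replicate (s.count a) a := by
    have h := (toFinset_sum_count_nsmul_eq s).symm
    simp only [nsmul_singleton] at h
    exact h
  conv_lhs => arg 2; rw [hs]
  rw [map_bind, bind_map]
  simp only [map_replicate]

end Multiset

theorem Fintype.sum_inv_eq_card_of_map_eq_bind_replicate {ι : Type*} [Fintype ι]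
    {f : ι → ℕ} {X : Multiset ℕ} (hX : 0 ∉ X)
    (hf : univ.val.map f = X.bind fun a => Multiset.replicate a a) :
    ∑ i, (f i : ℚ)⁻¹ = Multiset.card X := by
  rw [← Multiset.sum_map_inv_bind_replicate_self hX, ← hf, Multiset.map_map]
  rfl

theorem Equiv.Perm.exists_comp_eq_iff {ι α : Type*} [Fintype ι] [DecidableEq α]
    (f g : ι → α) :
    (∃ σ : Perm ι, f ∘ σ = g) ↔ univ.val.map f = univ.val.map g := by
  constructor
  · rintro ⟨σ, rfl⟩
    rw [← Multiset.map_map, Multiset.map_univ_val_equiv]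
  · intro h
    have hcard (h : ι → α) (c : α) :
        Fintype.card {i // h i = c} = (univ.val.map h).count c := by
      simp [Fintype.card_subtype, Multiset.count_map, Finset.card_def, eq_comm]
    exact ⟨ofFiberEquiv fun c => Fintype.equivOfCardEq (by rw [hcard, hcard, h]),
      funext (ofFiberEquiv_map _)⟩

theorem Equiv.Perm.comp_eq_of_le_of_sum_inv_eq {ι : Type*} [Fintype ι] {P q : ι → ℕ}
    (hq : ∀ j, q j ≠ 0) (hsum : ∑ i, (P i : ℚ)⁻¹ = ∑ j, (q j : ℚ)⁻¹)
    {σ : Perm ι} (hle : ∀ j, q j ≤ P (σ j)) : P ∘ σ = q := by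
  have hterm : ∀ j, (P (σ j) : ℚ)⁻¹ ≤ (q j : ℚ)⁻¹ := fun j =>
    inv_anti₀ (by have := hq j; positivity) (by exact_mod_cast hle j)
  have htotal : ∑ j, (P (σ j) : ℚ)⁻¹ = ∑ j, (q j : ℚ)⁻¹ := by
    rw [Equiv.sum_comp σ fun i => (P i : ℚ)⁻¹, hsum]
  funext j
  have := (sum_eq_sum_iff_of_le fun j _ => hterm j).mp htotal j (mem_univ j)
  exact_mod_cast inv_injective this

theorem Matrix.permanent_ne_zero_iff_exists_comp_perm_eq {ι R : Type*} [Fintype ι]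
    [DecidableEq ι] [CommRing R] [IsDomain R] [CharZero R]
    {g : ℕ → ι → R} {P q : ι → ℕ}
    (hzero : ∀ j k, k < q j → g k j = 0) (hne : ∀ j, g (q j) j ≠ 0)
    (hrigid : ∀ σ : Perm ι, (∀ j, q j ≤ P (σ j)) → P ∘ σ = q) :
    (of fun i j => g (P i) j).permanent ≠ 0 ↔ ∃ σ : Perm ι, P ∘ σ = q := by
  have hterm : ∀ σ : Perm ι,
      ∏ j, g (P (σ j)) j = if P ∘ σ = q then ∏ j, g (q j) j else 0 := by
    intro σ
    split_ifs with h
    · exact prod_congr rfl fun j _ => congrArg (g · j) (congrFun h j)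
    · obtain ⟨j, hj⟩ : ∃ j, P (σ j) < q j := by
        by_contra! hc
        exact h (hrigid σ hc)
      exact prod_eq_zero (mem_univ j) (hzero j _ hj)
  simp only [permanent, of_apply, hterm, sum_ite, sum_const_zero, add_zero, sum_const,
    nsmul_eq_mul, mul_ne_zero_iff, Nat.cast_ne_zero, card_ne_zero, prod_ne_zero_iff]
  simp [hne, Finset.Nonempty]

theorem Polynomial.eval_iterate_derivative_rootMultiplicity_ne_zero {R : Type*} [CommRing R]
    [IsDomain R] [CharZero R] {p : R[X]} (hp : p ≠ 0) (t : R) :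
    (derivative^[p.rootMultiplicity t] p).eval t ≠ 0 := fun h =>
  lt_irrefl _ <| lt_rootMultiplicity_of_isRoot_iterate_derivative hp fun _ hm =>
    hm.lt_or_eq.elim isRoot_iterate_derivative_of_lt_rootMultiplicity (· ▸ h)

theorem Polynomial.roots_map_rootMultiplicity {R : Type*} [CommRing R] [IsDomain R]
    [DecidableEq R] (p : R[X]) :
    p.roots.map (rootMultiplicity · p) =
      (p.roots.toFinset.val.map (rootMultiplicity · p)).bind
        fun a => Multiset.replicate a a := by
  simpa only [count_roots] using Multiset.map_count_eq_bind_replicate p.roots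

theorem univ_val_map_pTuple {m n : ℕ} (μ : Fin m → ℕ) (hsum : ∑ i, μ i = n) :
    univ.val.map (pTuple μ n) = (univ.val.map μ).bind fun a => Multiset.replicate a a := by
  set L := (List.ofFn μ).flatMap fun a => List.replicate a a
  have hlen : L.length = n := by
    simp [L, List.length_flatMap, List.sum_ofFn, hsum]
  have hofFn : List.ofFn (pTuple μ n) = L :=
    List.ext_getElem (by simp [hlen]) fun i _ hi => by
      rw [List.getElem_ofFn]
      exact List.getD_eq_getElem _ _ hi
  rw [Fin.univ_val_map, Fin.univ_val_map, hofFn, ← Multiset.coe_bind]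
  rfl

theorem multEq_iff_permanent_ne_zero_general (n m : ℕ)
    (μ : Fin m → ℕ) (hpos : ∀ i, 1 ≤ μ i) (hsum : ∑ i, μ i = n)
    (F : Polynomial ℂ) (hndr : F.roots.toFinset.card = m)
    (α : Fin n → ℂ) (hroots : F.roots = Finset.univ.val.map α) :
    multEq F μ ↔
      Matrix.permanent
        (Matrix.of fun i j : Fin n =>
          (derivative^[pTuple μ n i] F).eval (α j) / ((pTuple μ n i).factorial : ℂ))
        ≠ 0 := by
  set q : Fin n → ℕ := fun j => rootMultiplicity (α j) F
  set B := F.roots.toFinset.val.map fun r => rootMultiplicity r F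
  have hroot (j : Fin n) : α j ∈ F.roots :=
    hroots ▸ Multiset.mem_map_of_mem α (mem_univ_val j)
  have hμ0 : 0 ∉ univ.val.map μ := by simpa using fun i => Nat.one_le_iff_ne_zero.mp (hpos i)
  have hB0 : 0 ∉ B := by simp [B, ← count_roots]
  have hP := univ_val_map_pTuple μ hsum
  have hq : univ.val.map q = B.bind fun a => Multiset.replicate a a := by
    rw [← F.roots_map_rootMultiplicity, hroots, Multiset.map_map]
    rfl
  have hrigid (σ : Perm (Fin n)) (hle : ∀ j, q j ≤ pTuple μ n (σ j)) :
      pTuple μ n ∘ σ = q := by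
    refine Equiv.Perm.comp_eq_of_le_of_sum_inv_eq (fun j => ?_) ?_ hle
    · simpa [q, ← count_roots] using hroot j
    · rw [Fintype.sum_inv_eq_card_of_map_eq_bind_replicate hμ0 hP,
        Fintype.sum_inv_eq_card_of_map_eq_bind_replicate hB0 hq]
      simp [B, ← hndr, Multiset.card_toFinset]
  calc multEq F μ ↔ univ.val.map (pTuple μ n) = univ.val.map q := by
        rw [hP, hq, Multiset.bind_replicate_self_inj hμ0 hB0]
        exact eq_comm
    _ ↔ ∃ σ : Perm (Fin n), pTuple μ n ∘ σ = q := (Equiv.Perm.exists_comp_eq_iff _ _).symm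
    _ ↔ _ := (Matrix.permanent_ne_zero_iff_exists_comp_perm_eq
        (g := fun k j => (derivative^[k] F).eval (α j) / (k.factorial : ℂ))
        (fun j k hk => by simp [(isRoot_iterate_derivative_of_lt_rootMultiplicity hk).eq_zero])
        (fun j => div_ne_zero
          (eval_iterate_derivative_rootMultiplicity_ne_zero (ne_zero_of_mem_roots (hroot j)) _)
          (Nat.cast_ne_zero.mpr (Nat.factorial_ne_zero _)))
        hrigid).symm

/-- Let `μ = (μ_1, …, μ_m)` be an `m`-partition of `n` and let `F ∈ ℂ[x]` have degree
`n`, exactly `m` distinct complex roots, and roots `α_1, …, α_n` listed with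
multiplicity.  Then `mult F = μ` if and only if the permanent of the `n × n` matrix
whose `(i,j)` entry is `F^{(p_i)}(α_j) / p_i!` is nonzero. -/
theorem multEq_iff_permanent_ne_zero (n m : ℕ) (hm : 0 < m)
    (μ : Fin m → ℕ) (hmono : Antitone μ) (hpos : ∀ i, 1 ≤ μ i) (hsum : ∑ i, μ i = n)
    (F : Polynomial ℂ) (hdeg : F.natDegree = n) (hndr : F.roots.toFinset.card = m)
    (α : Fin n → ℂ) (hroots : F.roots = Finset.univ.val.map α) :
    multEq F μ ↔
      Matrix.permanent
        (Matrix.of fun i j : Fin n =>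
          (derivative^[pTuple μ n i] F).eval (α j) / ((pTuple μ n i).factorial : ℂ))
        ≠ 0 :=
  multEq_iff_permanent_ne_zero_general n m μ hpos hsum F hndr α hroots
end

section
/- Let A and B be n×n matrices over a commutative ring. Then Σ_{τ∈S_n} det(A ∘ (P_τ B)) = det(A)·per(B), where the sum ranges over all permutations τ of {1,…,n}. -/
open Finset Equiv

/-- **Sum over permutations of determinants of Hadamard products.**
For `n × n` matrices `A` and `B` over a commutative ring,
`Σ_{τ ∈ S_n} det(A ∘ (P_τ B)) = det(A) · per(B)`, where `∘` is the entrywise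
(Hadamard) product and `P_τ B` permutes the rows of `B` by `τ`. -/
theorem sum_det_hadamard_permuted_eq_det_mul_permanent
    {R : Type*} [CommRing R] {n : ℕ} (A B : Matrix (Fin n) (Fin n) R) :
    ∑ τ : Equiv.Perm (Fin n),
        Matrix.det (Matrix.of fun i j : Fin n => A i j * B (τ i) j)
      = Matrix.det A * Matrix.permanent B := by
  simp only [Matrix.det_apply, Matrix.of_apply, Matrix.permanent]
  rw [Finset.sum_comm, Finset.sum_mul]
  refine Finset.sum_congr rfl fun σ _ => ?_
  rw [Fintype.sum_equiv (Equiv.mulRight σ)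
      (fun τ => Equiv.Perm.sign σ • ∏ i, (A (σ i) i * B (τ (σ i)) i))
      (fun τ => Equiv.Perm.sign σ • ∏ i, (A (σ i) i * B (τ i) i))
      (fun τ => by simp [Equiv.Perm.mul_apply])]
  rw [smul_mul_assoc, ← Finset.smul_sum]
  congr 1
  rw [Finset.mul_sum]
  exact Finset.sum_congr rfl fun τ _ => Finset.prod_mul_distrib
end

section
/- Let n ≥ 1, let F = a_0(x−α_1)⋯(x−α_n) ∈ ℂ[x] with a_0 ≠ 0, for each i ≥ 0 let ω_i ∈ ℂ[x] be monic of degree i, and let G_1,…,G_n ∈ ℂ[x] have degree at most 2n−2. Then dp[ω_{n−2}F, …, ω_1 F, ω_0 F, G_1, …, G_n] · det(V) = a_0^{n−1} · det(W), where V is the n×n matrix with (i,j)-entry ω_{n−i}(α_j) and W is the n×n matrix with (i,j)-entry G_i(α_j). -/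
open Polynomial Finset

/-- `dp [F_1, …, F_k]`: the determinant of the `k × k` matrix whose `(i,j)` entry
(0-indexed) is the coefficient of `x^{k−1−j}` in `F_i`, for polynomials of
degree at most `k − 1`. -/
noncomputable def dp {k : ℕ} (Fs : Fin k → Polynomial ℂ) : ℂ :=
  Matrix.det (Matrix.of fun i j : Fin k => (Fs i).coeff (k - 1 - (j : ℕ)))

lemma eval_rev {k : ℕ} (p : Polynomial ℂ) (hp : p.natDegree < k) (x : ℂ) :
    ∑ r : Fin k, p.coeff (k - 1 - (r : ℕ)) * x ^ (k - 1 - (r : ℕ)) = p.eval x := by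
  rw [Fin.sum_univ_eq_sum_range (fun r => p.coeff (k - 1 - r) * x ^ (k - 1 - r)),
    Finset.sum_range_reflect (fun j => p.coeff j * x ^ j) k]
  exact (Polynomial.eval_eq_sum_range' hp x).symm

/-- Let `n ≥ 1`, `F = a_0 (x − α_1) ⋯ (x − α_n)` with `a_0 ≠ 0`, let `ω_i` be monic of
degree `i` for each `i ≥ 0`, and let `G_1, …, G_n` have degree at most `2n − 2`.  Then
`dp[ω_{n−2}F, …, ω_1 F, ω_0 F, G_1, …, G_n] · det V = a_0^{n−1} · det W`, where
`V` is the `n × n` matrix with `(i,j)` entry `ω_{n−i}(α_j)` (1-indexed) and `W` is the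
`n × n` matrix with `(i,j)` entry `G_i(α_j)`. -/
theorem dp_mul_det_vandermonde_eq (n : ℕ) (hn : 1 ≤ n) (a0 : ℂ) (ha : a0 ≠ 0)
    (α : Fin n → ℂ) (F : Polynomial ℂ) (hF : F = C a0 * ∏ i, (X - C (α i)))
    (ω : ℕ → Polynomial ℂ) (hω : ∀ i, (ω i).Monic ∧ (ω i).natDegree = i)
    (G : Fin n → Polynomial ℂ) (hG : ∀ i, (G i).natDegree ≤ 2 * n - 2) :
    dp (fun i : Fin (2 * n - 1) =>
        if (i : ℕ) < n - 1 then ω (n - 2 - (i : ℕ)) * F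
        else if h : (i : ℕ) - (n - 1) < n then G ⟨(i : ℕ) - (n - 1), h⟩ else 0) *
      Matrix.det (Matrix.of fun i j : Fin n => (ω (n - 1 - (i : ℕ))).eval (α j))
    = a0 ^ (n - 1) *
        Matrix.det (Matrix.of fun i j : Fin n => (G i).eval (α j)) := by
  classical
  set P : Fin (2 * n - 1) → Polynomial ℂ := fun i =>
    if (i : ℕ) < n - 1 then ω (n - 2 - (i : ℕ)) * F
    else if h : (i : ℕ) - (n - 1) < n then G ⟨(i : ℕ) - (n - 1), h⟩ else 0 with hP
  -- basic facts about F
  have hmon : (∏ i : Fin n, (X - C (α i)) : Polynomial ℂ).Monic :=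
    monic_prod_of_monic _ _ (fun i _ => monic_X_sub_C (α i))
  have hpd : (∏ i : Fin n, (X - C (α i)) : Polynomial ℂ).natDegree = n := by
    rw [natDegree_prod_of_monic _ _ (fun i _ => monic_X_sub_C (α i))]
    simp
  have hFdeg : F.natDegree = n := by rw [hF, natDegree_C_mul ha, hpd]
  have hFlead : F.leadingCoeff = a0 := by
    rw [hF, leadingCoeff_mul, leadingCoeff_C, hmon.leadingCoeff, mul_one]
  have hF0 : F ≠ 0 := by
    rw [hF]; exact mul_ne_zero (Polynomial.C_ne_zero.mpr ha) hmon.ne_zero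
  have hωF : ∀ d, (ω d * F).natDegree = d + n := fun d => by
    rw [natDegree_mul (hω d).1.ne_zero hF0, (hω d).2, hFdeg]
  have hωFlead : ∀ d, (ω d * F).leadingCoeff = a0 := fun d => by
    rw [leadingCoeff_mul, (hω d).1.leadingCoeff, one_mul, hFlead]
  have hFeval : ∀ j, F.eval (α j) = 0 := by
    intro j
    rw [hF, eval_mul, eval_prod]
    rw [Finset.prod_eq_zero (Finset.mem_univ j) (by simp)]
    ring
  -- the reindexing equivalence
  have hadd : (n - 1) + n = 2 * n - 1 := by omega
  set e : Fin (n - 1) ⊕ Fin n ≃ Fin (2 * n - 1) :=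
    finSumFinEquiv.trans (finCongr hadd) with he
  have he1 : ∀ i : Fin (n - 1), ((e (Sum.inl i)) : ℕ) = (i : ℕ) := by
    intro i; simp [he]
  have he2 : ∀ i : Fin n, ((e (Sum.inr i)) : ℕ) = (n - 1) + (i : ℕ) := by
    intro i; simp [he]
  have hP1 : ∀ i : Fin (n - 1), P (e (Sum.inl i)) = ω (n - 2 - (i : ℕ)) * F := by
    intro i
    simp only [hP, he1]
    rw [if_pos i.isLt]
  have hP2 : ∀ i : Fin n, P (e (Sum.inr i)) = G i := by
    intro i
    have hi := i.isLt
    simp only [hP, he2, Nat.add_sub_cancel_left]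
    rw [if_neg (by omega), dif_pos i.isLt, Fin.eta]
  have hPdeg : ∀ x : Fin (2 * n - 1), (P x).natDegree < 2 * n - 1 := by
    intro x
    simp only [hP]
    split_ifs with h1 h2
    · rw [hωF]; omega
    · have := hG ⟨(x : ℕ) - (n - 1), h2⟩; omega
    · simp only [natDegree_zero]; omega
  -- the matrices
  set M0 : Matrix (Fin (2 * n - 1)) (Fin (2 * n - 1)) ℂ :=
    Matrix.of (fun i j => (P i).coeff (2 * n - 1 - 1 - (j : ℕ))) with hM0
  set A : Matrix (Fin (n - 1)) (Fin (n - 1)) ℂ :=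
    Matrix.of (fun i j => (ω (n - 2 - (i : ℕ)) * F).coeff (2 * n - 1 - 1 - (j : ℕ))) with hA
  set B : Matrix (Fin n) (Fin (n - 1)) ℂ :=
    Matrix.of (fun i j => (G i).coeff (2 * n - 1 - 1 - (j : ℕ))) with hB
  set W : Matrix (Fin n) (Fin n) ℂ :=
    Matrix.of (fun i j => (G i).eval (α j)) with hW
  set Vd : Matrix (Fin n) (Fin n) ℂ :=
    Matrix.of (fun i j => α j ^ (n - 1 - (i : ℕ))) with hVd
  set T : Matrix (Fin (n - 1) ⊕ Fin n) (Fin (n - 1) ⊕ Fin n) ℂ :=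
    Matrix.fromBlocks 1 (Matrix.of fun r c => α c ^ (2 * n - 1 - 1 - (r : ℕ))) 0 Vd with hT
  -- evaluation of rows times the right columns of T
  have key : ∀ (x' : Fin (2 * n - 1)) (c : Fin n),
      (∑ s : Fin (n - 1), M0 x' (e (Sum.inl s)) * α c ^ (2 * n - 1 - 1 - (s : ℕ))
        + ∑ s : Fin n, M0 x' (e (Sum.inr s)) * α c ^ (n - 1 - (s : ℕ)))
      = (P x').eval (α c) := by
    intro x' c
    rw [← eval_rev (P x') (hPdeg x') (α c),
      ← Equiv.sum_comp e
        (fun t => (P x').coeff (2 * n - 1 - 1 - (t : ℕ)) * α c ^ (2 * n - 1 - 1 - (t : ℕ))),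
      Fintype.sum_sum_type]
    refine congrArg₂ (· + ·) (Finset.sum_congr rfl fun s _ => ?_)
      (Finset.sum_congr rfl fun s _ => ?_)
    · simp only [hM0, Matrix.of_apply, he1]
    · have hs := s.isLt
      have hx : 2 * n - 1 - 1 - ((n - 1) + (s : ℕ)) = n - 1 - (s : ℕ) := by omega
      simp only [hM0, Matrix.of_apply, he2, hx]
  -- the block decomposition
  have hMT : (M0.submatrix e e) * T = Matrix.fromBlocks A 0 B W := by
    ext x y
    cases x with
    | inl i =>
      cases y with
      | inl j =>
        simp only [Matrix.mul_apply, Fintype.sum_sum_type, hT,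
          Matrix.fromBlocks_apply₁₁, Matrix.fromBlocks_apply₂₁, Matrix.one_apply,
          mul_ite, mul_one, mul_zero, Finset.sum_ite_eq', Finset.mem_univ, if_true,
          Finset.sum_const_zero, add_zero, Matrix.submatrix_apply,
          Matrix.zero_apply]
        simp only [hM0, Matrix.of_apply, hP1, he1, hA, mul_zero,
          Finset.sum_const_zero, add_zero]
      | inr c =>
        simp only [Matrix.mul_apply, Fintype.sum_sum_type, hT,
          Matrix.fromBlocks_apply₁₂, Matrix.fromBlocks_apply₂₂,
          Matrix.submatrix_apply, Matrix.of_apply, hVd]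
        rw [key (e (Sum.inl i)) c, hP1, eval_mul, hFeval, mul_zero]
        simp
    | inr i =>
      cases y with
      | inl j =>
        simp only [Matrix.mul_apply, Fintype.sum_sum_type, hT,
          Matrix.fromBlocks_apply₁₁, Matrix.fromBlocks_apply₂₁, Matrix.one_apply,
          mul_ite, mul_one, mul_zero, Finset.sum_ite_eq', Finset.mem_univ, if_true,
          Finset.sum_const_zero, add_zero, Matrix.submatrix_apply,
          Matrix.zero_apply]
        simp only [hM0, Matrix.of_apply, hP2, he1, hB, mul_zero,
          Finset.sum_const_zero, add_zero]
      | inr c =>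
        simp only [Matrix.mul_apply, Fintype.sum_sum_type, hT,
          Matrix.fromBlocks_apply₁₂, Matrix.fromBlocks_apply₂₂,
          Matrix.submatrix_apply, Matrix.of_apply, hVd]
        rw [key (e (Sum.inr i)) c, hP2]
        simp [hW]
  -- determinant of A
  have hdetA : A.det = a0 ^ (n - 1) := by
    have ht : A.BlockTriangular id := by
      intro i j hji
      have hji' : (j : ℕ) < (i : ℕ) := hji
      have hi := i.isLt
      simp only [hA, Matrix.of_apply]
      apply Polynomial.coeff_eq_zero_of_natDegree_lt
      rw [hωF]; omega
    rw [Matrix.det_of_upperTriangular ht]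
    have hdiag : ∀ i : Fin (n - 1), A i i = a0 := by
      intro i
      have hi := i.isLt
      have hx : 2 * n - 1 - 1 - (i : ℕ) = (ω (n - 2 - (i : ℕ)) * F).natDegree := by
        rw [hωF]; omega
      simp only [hA, Matrix.of_apply, hx, Polynomial.coeff_natDegree, hωFlead]
    rw [Finset.prod_congr rfl (fun i _ => hdiag i)]
    simp
  -- determinant of T
  have hdetT : T.det = Vd.det := by
    rw [hT, Matrix.det_fromBlocks_zero₂₁, Matrix.det_one, one_mul]
  -- the Vandermonde-type factorization of V
  set L : Matrix (Fin n) (Fin n) ℂ :=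
    Matrix.of (fun i s => (ω (n - 1 - (i : ℕ))).coeff (n - 1 - (s : ℕ))) with hL
  have hLV : (Matrix.of fun i j : Fin n => (ω (n - 1 - (i : ℕ))).eval (α j)) = L * Vd := by
    ext i j
    rw [Matrix.mul_apply]
    simp only [hL, hVd, Matrix.of_apply]
    exact (eval_rev (ω (n - 1 - (i : ℕ))) (by rw [(hω _).2]; omega) (α j)).symm
  have hdetL : L.det = 1 := by
    have ht : L.BlockTriangular id := by
      intro i j hji
      have hji' : (j : ℕ) < (i : ℕ) := hji
      have hi := i.isLt
      simp only [hL, Matrix.of_apply]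
      apply Polynomial.coeff_eq_zero_of_natDegree_lt
      rw [(hω _).2]; omega
    rw [Matrix.det_of_upperTriangular ht]
    have hdiag : ∀ i : Fin n, L i i = 1 := by
      intro i
      have h1 := (hω (n - 1 - (i : ℕ))).1.coeff_natDegree
      rw [(hω (n - 1 - (i : ℕ))).2] at h1
      simp only [hL, Matrix.of_apply]
      exact h1
    rw [Finset.prod_congr rfl (fun i _ => hdiag i)]
    simp
  have hdetV : (Matrix.of fun i j : Fin n => (ω (n - 1 - (i : ℕ))).eval (α j)).det = Vd.det := by
    rw [hLV, Matrix.det_mul, hdetL, one_mul]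
  have h1 : M0.det * Vd.det = a0 ^ (n - 1) * W.det := by
    rw [← Matrix.det_submatrix_equiv_self e M0, ← hdetT, ← Matrix.det_mul, hMT,
      Matrix.det_fromBlocks_zero₁₂, hdetA]
  rw [hdetV]
  exact h1
end

section
/- Let μ = (μ_1,…,μ_m) be an m-partition of n, and let F ∈ ℂ[x] have degree n, exactly m distinct complex roots, and roots α_1,…,α_n listed with multiplicity. Then mult(F) = μ if and only if there exists σ ∈ S_p such that F^{(σ_i)}(α_i) ≠ 0 for all i = 1,…,n. -/
open Polynomial Finset Equiv

/-- `S_p`: the set of all distinct rearrangements of the tuple `p` associated with `μ`. -/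
def Sp {m : ℕ} (μ : Fin m → ℕ) (n : ℕ) : Finset (Fin n → ℕ) :=
  Finset.image (fun π : Equiv.Perm (Fin n) => pTuple μ n ∘ π) Finset.univ

/-!
The multiplicity of a root `t` of `F` is the least `k` with `F^{(k)}(t) ≠ 0`. Hence, if
`mult F = μ`, then `σ_i = mult(α_i)` is a valid choice, and conversely every valid `σ`
satisfies `σ_i ≥ mult(α_i)`. Both tuples have harmonic sum `∑ 1/σ_i = m`, since each root of
multiplicity `a` (each part `a` of `μ`) produces `a` entries equal to `a`; so the domination is
an equality. It remains that a multiset of positive integers is determined by its blow-up in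
which every value `a` is repeated `a` times.
-/

namespace Multiset

def replicateSelf (s : Multiset ℕ) : Multiset ℕ := s.bind fun a => replicate a a

@[simp]
theorem replicateSelf_cons (a : ℕ) (s : Multiset ℕ) :
    replicateSelf (a ::ₘ s) = replicate a a + replicateSelf s := cons_bind _ _ _

theorem count_replicateSelf (s : Multiset ℕ) (x : ℕ) :
    (replicateSelf s).count x = x * s.count x := by
  induction s using Multiset.induction_on with
  | empty => simp [replicateSelf]
  | cons a s ih =>
    rw [replicateSelf_cons, count_add, ih, count_replicate, count_cons]
    rcases eq_or_ne a x with rfl | h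
    · rw [if_pos rfl, if_pos rfl]; ring
    · rw [if_neg h, if_neg h.symm]; ring

theorem replicateSelf_injOn : Set.InjOn replicateSelf {s | 0 ∉ s} := by
  intro s hs t ht hst
  ext x
  rcases Nat.eq_zero_or_pos x with rfl | hx
  · rw [count_eq_zero_of_notMem hs, count_eq_zero_of_notMem ht]
  · simpa [count_replicateSelf, hx.ne'] using congrArg (count x) hst

theorem sum_map_inv_replicateSelf {s : Multiset ℕ} (hs : 0 ∉ s) :
    ((replicateSelf s).map fun x : ℕ => (x : ℚ)⁻¹).sum = card s := by
  induction s using Multiset.induction_on with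
  | empty => simp [replicateSelf]
  | cons a s ih =>
    rw [mem_cons, not_or] at hs
    rw [replicateSelf_cons, map_add, sum_add, ih hs.2, map_replicate, sum_replicate,
      nsmul_eq_mul, mul_inv_cancel₀ (by exact_mod_cast Ne.symm hs.1), card_cons]
    push_cast; ring

theorem map_eq_sum_replicate_count {α β : Type*} [DecidableEq α] (s : Multiset α) (f : α → β) :
    s.map f = ∑ a ∈ s.toFinset, replicate (s.count a) (f a) := by
  simp_rw [← nsmul_singleton]
  rw [← Finset.sum_multiset_map_count s fun a => ({f a} : Multiset β)]
  exact (bind_singleton s f).symm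

end Multiset

theorem List.ofFn_getD_of_length_eq {α : Type*} (l : List α) (d : α) {n : ℕ}
    (hl : l.length = n) : List.ofFn (fun i : Fin n => l.getD i d) = l := by
  subst hl
  simp

theorem Finset.exists_perm_eq_comp_of_map_univ_eq {ι α : Type*} [Fintype ι] [DecidableEq α]
    {f g : ι → α} (h : univ.val.map f = univ.val.map g) : ∃ π : Perm ι, f = g ∘ π := by
  have hfiber (c : α) : Fintype.card {i // f i = c} = Fintype.card {i // g i = c} := by
    simpa [Fintype.card_subtype, Multiset.count_map, eq_comm, Finset.card_def,
      Finset.filter_val] using congrArg (Multiset.count c) h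
  exact ⟨ofFiberEquiv fun c => Fintype.equivOfCardEq (hfiber c),
    funext fun i => (ofFiberEquiv_map _ i).symm⟩

theorem Finset.zero_notMem_map_univ_val {ι : Type*} [Fintype ι] {f : ι → ℕ} (hf : ∀ i, f i ≠ 0) :
    0 ∉ univ.val.map f := by
  simpa [eq_comm] using hf

theorem Finset.sum_inv_eq_card_of_map_univ_eq_replicateSelf {ι : Type*} [Fintype ι]
    {f : ι → ℕ} {s : Multiset ℕ} (hf : univ.val.map f = s.replicateSelf) (hs : 0 ∉ s) :
    ∑ i, ((f i : ℚ))⁻¹ = Multiset.card s := by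
  rw [Finset.sum_eq_multiset_sum, ← Multiset.sum_map_inv_replicateSelf hs, ← hf, Multiset.map_map]
  rfl

theorem eq_of_le_of_sum_inv_eq {ι : Type*} [Fintype ι] {f g : ι → ℕ} (hf : ∀ i, f i ≠ 0)
    (hle : ∀ i, f i ≤ g i) (hsum : ∑ i, ((f i : ℚ))⁻¹ = ∑ i, ((g i : ℚ))⁻¹) : f = g := by
  have hanti (i : ι) : ((g i : ℚ))⁻¹ ≤ (f i : ℚ)⁻¹ :=
    inv_anti₀ (Nat.cast_pos.mpr (Nat.pos_of_ne_zero (hf i))) (by exact_mod_cast hle i)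
  funext i
  have := (sum_eq_sum_iff_of_le fun i _ => hanti i).mp hsum.symm i (mem_univ i)
  exact_mod_cast (inv_inj.mp this).symm

namespace Polynomial

variable {R : Type*} [CommRing R]

theorem rootMultiplicity_le_of_eval_iterate_derivative_ne_zero {p : R[X]} {t : R} {k : ℕ}
    (h : (derivative^[k] p).eval t ≠ 0) : p.rootMultiplicity t ≤ k :=
  not_lt.mp fun hk => h (isRoot_iterate_derivative_of_lt_rootMultiplicity hk)

variable [IsDomain R]

theorem eval_iterate_derivative_rootMultiplicity_ne_zero_s6 [CharZero R] {p : R[X]} (hp : p ≠ 0)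
    (t : R) : (derivative^[p.rootMultiplicity t] p).eval t ≠ 0 := by
  rw [eval_iterate_derivative_rootMultiplicity, nsmul_eq_mul]
  exact mul_ne_zero (Nat.cast_ne_zero.mpr (Nat.factorial_ne_zero _))
    (eval_divByMonic_pow_rootMultiplicity_ne_zero t hp)

theorem rootMultiplicity_ne_zero_of_mem_roots {p : R[X]} {t : R} (h : t ∈ p.roots) :
    p.rootMultiplicity t ≠ 0 :=
  (rootMultiplicity_pos'.mpr (mem_roots'.mp h)).ne'

variable [DecidableEq R] {ι : Type*} [Fintype ι] {p : R[X]} {α : ι → R}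

theorem map_univ_rootMultiplicity (hα : p.roots = univ.val.map α) :
    univ.val.map (fun i => p.rootMultiplicity (α i)) =
      (p.roots.toFinset.val.map (rootMultiplicity · p)).replicateSelf := by
  calc univ.val.map (fun i => p.rootMultiplicity (α i))
      _ = p.roots.map (rootMultiplicity · p) := by rw [hα, Multiset.map_map]; rfl
      _ = _ := by
        rw [Multiset.map_eq_sum_replicate_count, Multiset.replicateSelf, Multiset.bind_map]
        simp only [count_roots]
        rfl

theorem zero_notMem_map_rootMultiplicity (p : R[X]) :
    0 ∉ p.roots.toFinset.val.map (rootMultiplicity · p) := by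
  simpa using fun t ht => rootMultiplicity_ne_zero_of_mem_roots ht

theorem sum_inv_rootMultiplicity (hα : p.roots = univ.val.map α) :
    ∑ i, ((p.rootMultiplicity (α i) : ℚ))⁻¹ = #p.roots.toFinset := by
  rw [sum_inv_eq_card_of_map_univ_eq_replicateSelf (map_univ_rootMultiplicity hα)
    (zero_notMem_map_rootMultiplicity p), Multiset.card_map, card_val]

end Polynomial

section pTuple

variable {m n : ℕ} {μ : Fin m → ℕ}

theorem map_univ_pTuple (hsum : ∑ i, μ i = n) :
    univ.val.map (pTuple μ n) = (univ.val.map μ).replicateSelf := by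
  have hlen : ((List.ofFn μ).flatMap fun a => List.replicate a a).length = n := by
    simp [List.length_flatMap, List.sum_ofFn, hsum]
  rw [Fin.univ_val_map, Fin.univ_val_map]
  unfold pTuple
  rw [List.ofFn_getD_of_length_eq _ _ hlen, Multiset.replicateSelf, ← Multiset.coe_bind]
  simp only [Multiset.coe_replicate]

theorem sum_inv_pTuple (hμ : ∀ i, μ i ≠ 0) (hsum : ∑ i, μ i = n) :
    ∑ i, ((pTuple μ n i : ℚ))⁻¹ = m := by
  rw [sum_inv_eq_card_of_map_univ_eq_replicateSelf (map_univ_pTuple hsum)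
    (zero_notMem_map_univ_val hμ), Multiset.card_map, card_val, card_univ, Fintype.card_fin]

theorem multEq_iff_map_univ_eq (hμ : ∀ i, μ i ≠ 0) (hsum : ∑ i, μ i = n) {F : ℂ[X]}
    {α : Fin n → ℂ} (hroots : F.roots = univ.val.map α) :
    multEq F μ ↔ univ.val.map (fun i => F.rootMultiplicity (α i)) = univ.val.map (pTuple μ n) := by
  rw [map_univ_rootMultiplicity hroots, map_univ_pTuple hsum]
  exact (Multiset.replicateSelf_injOn.eq_iff (zero_notMem_map_rootMultiplicity F)
    (zero_notMem_map_univ_val hμ)).symm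

end pTuple

theorem multEq_iff_exists_rearrangement_general (n m : ℕ)
    (μ : Fin m → ℕ) (hpos : ∀ i, 1 ≤ μ i) (hsum : ∑ i, μ i = n)
    (F : Polynomial ℂ) (hndr : F.roots.toFinset.card = m)
    (α : Fin n → ℂ) (hroots : F.roots = Finset.univ.val.map α) :
    multEq F μ ↔
      ∃ σ ∈ Sp μ n, ∀ i, (derivative^[σ i] F).eval (α i) ≠ 0 := by
  have hμ (i : Fin m) : μ i ≠ 0 := Nat.one_le_iff_ne_zero.mp (hpos i)
  have hα (i : Fin n) : α i ∈ F.roots := hroots ▸ Multiset.mem_map_of_mem _ (mem_univ i)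
  rw [multEq_iff_map_univ_eq hμ hsum hroots]
  constructor
  · intro h
    obtain ⟨π, hπ⟩ := exists_perm_eq_comp_of_map_univ_eq h
    exact ⟨_, mem_image.mpr ⟨π, mem_univ _, hπ.symm⟩, fun i =>
      eval_iterate_derivative_rootMultiplicity_ne_zero_s6 (ne_zero_of_mem_roots (hα i)) _⟩
  · rintro ⟨σ, hσ, hne⟩
    obtain ⟨π, -, rfl⟩ := mem_image.mp hσ
    have hdom : (fun i => F.rootMultiplicity (α i)) = pTuple μ n ∘ π := by
      refine eq_of_le_of_sum_inv_eq (fun i => rootMultiplicity_ne_zero_of_mem_roots (hα i))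
        (fun i => rootMultiplicity_le_of_eval_iterate_derivative_ne_zero (hne i)) ?_
      rw [sum_inv_rootMultiplicity hroots, hndr, Function.comp_def,
        Equiv.sum_comp π fun i => ((pTuple μ n i : ℚ))⁻¹, sum_inv_pTuple hμ hsum]
    rw [hdom, ← Multiset.map_map, Multiset.map_univ_val_equiv]

/-- Let `μ = (μ_1, …, μ_m)` be an `m`-partition of `n` and let `F ∈ ℂ[x]` have degree
`n`, exactly `m` distinct complex roots, and roots `α_1, …, α_n` listed with
multiplicity.  Then `mult F = μ` if and only if there exists `σ ∈ S_p` with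
`F^{(σ_i)}(α_i) ≠ 0` for all `i = 1, …, n`. -/
theorem multEq_iff_exists_rearrangement (n m : ℕ) (hm : 0 < m)
    (μ : Fin m → ℕ) (hmono : Antitone μ) (hpos : ∀ i, 1 ≤ μ i) (hsum : ∑ i, μ i = n)
    (F : Polynomial ℂ) (hdeg : F.natDegree = n) (hndr : F.roots.toFinset.card = m)
    (α : Fin n → ℂ) (hroots : F.roots = Finset.univ.val.map α) :
    multEq F μ ↔
      ∃ σ ∈ Sp μ n, ∀ i, (derivative^[σ i] F).eval (α i) ≠ 0 :=
  multEq_iff_exists_rearrangement_general n m μ hpos hsum F hndr α hroots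
end

section
/- Let μ = (μ_1,…,μ_m) be an m-partition of n, let F ∈ ℂ[x] have degree n and roots α_1,…,α_n listed with multiplicity, and let σ ∈ S_p be such that for every i the multiplicity of α_i as a root of F equals σ_i. Then for every π ∈ S_p with π ≠ σ, the product ∏_{i=1}^n F^{(π_i)}(α_i) equals 0. -/
open Polynomial Finset Equiv

/-- Let `μ = (μ_1, …, μ_m)` be an `m`-partition of `n`, let `F ∈ ℂ[x]` have degree `n`
and roots `α_1, …, α_n` listed with multiplicity, and let `σ ∈ S_p` be such that for
every `i` the multiplicity of `α_i` as a root of `F` equals `σ_i`.  Then for every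
`π ∈ S_p` with `π ≠ σ`, the product `∏_{i=1}^n F^{(π_i)}(α_i)` equals `0`. -/
theorem prod_iterated_deriv_eval_eq_zero (n m : ℕ) (hm : 0 < m)
    (μ : Fin m → ℕ) (hmono : Antitone μ) (hpos : ∀ i, 1 ≤ μ i) (hsum : ∑ i, μ i = n)
    (F : Polynomial ℂ) (hdeg : F.natDegree = n)
    (α : Fin n → ℂ) (hroots : F.roots = Finset.univ.val.map α)
    (σ : Fin n → ℕ) (hσ : σ ∈ Sp μ n)
    (hmult : ∀ i, rootMultiplicity (α i) F = σ i) :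
    ∀ π ∈ Sp μ n, π ≠ σ → ∏ i, (derivative^[π i] F).eval (α i) = 0 := by
  intro π hπ hne
  simp only [Sp, Finset.mem_image] at hσ hπ
  obtain ⟨eσ, -, heσ⟩ := hσ
  obtain ⟨eπ, -, heπ⟩ := hπ
  have hsumeq : ∑ i, σ i = ∑ i, π i := by
    rw [← heσ, ← heπ]
    rw [show ((pTuple μ n) ∘ eσ) = fun i => pTuple μ n (eσ i) from rfl]
    rw [show ((pTuple μ n) ∘ eπ) = fun i => pTuple μ n (eπ i) from rfl]
    rw [Equiv.sum_comp eσ, Equiv.sum_comp eπ]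
  by_contra hprod
  have hle : ∀ i ∈ Finset.univ, σ i ≤ π i := by
    intro i _
    by_contra hlt
    push_neg at hlt
    have : (derivative^[π i] F).eval (α i) = 0 := by
      have := Polynomial.isRoot_iterate_derivative_of_lt_rootMultiplicity
        (p := F) (t := α i) (n := π i) (by rw [hmult i]; exact hlt)
      exact this
    exact hprod (Finset.prod_eq_zero (Finset.mem_univ i) this)
  have := (Finset.sum_eq_sum_iff_of_le hle).mp hsumeq
  exact hne (funext fun i => ((this i (Finset.mem_univ i))).symm)
end

section
/- Let k ≥ 0 and let x_1,…,x_k be real numbers with x_j ≥ 4 for all j. Then ∏_{j=1}^k (x_j − 1) − Σ_{j=1}^k x_j ≥ 3^k − 4k. -/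
open Finset

/-- If `x_1, …, x_k` are real numbers with `x_j ≥ 4` for all `j`, then
`∏_{j=1}^k (x_j − 1) − Σ_{j=1}^k x_j ≥ 3^k − 4k`. -/
theorem prod_sub_one_sub_sum_ge (k : ℕ) (x : ℕ → ℝ)
    (hx : ∀ j ∈ Finset.Icc 1 k, (4 : ℝ) ≤ x j) :
    (3 : ℝ) ^ k - 4 * k ≤
      (∏ j ∈ Finset.Icc 1 k, (x j - 1)) - ∑ j ∈ Finset.Icc 1 k, x j := by
  induction k with
  | zero => simp
  | succ k ih =>
    have hmem : (k+1) ∉ Finset.Icc 1 k := by simp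
    have hins : Finset.Icc 1 (k+1) = insert (k+1) (Finset.Icc 1 k) := by
      ext j; simp [Finset.mem_Icc]; omega
    have hx' : ∀ j ∈ Finset.Icc 1 k, (4 : ℝ) ≤ x j := by
      intro j hj
      exact hx j (by rw [hins]; exact Finset.mem_insert_of_mem hj)
    have ht : (4 : ℝ) ≤ x (k+1) := hx (k+1) (by simp)
    have hP : (3 : ℝ) ^ k ≤ ∏ j ∈ Finset.Icc 1 k, (x j - 1) := by
      calc (3 : ℝ) ^ k = ∏ j ∈ Finset.Icc 1 k, (3 : ℝ) := by
            rw [Finset.prod_const, Nat.card_Icc]; norm_num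
        _ ≤ _ := Finset.prod_le_prod (fun j hj => by norm_num)
            (fun j hj => by linarith [hx' j hj])
    have h3 : (1 : ℝ) ≤ 3 ^ k := one_le_pow₀ (by norm_num)
    have key := mul_nonneg (by linarith : (0:ℝ) ≤ x (k+1) - 4)
      (by linarith : (0:ℝ) ≤ 3 ^ k - 1)
    have key2 := mul_le_mul_of_nonneg_left hP (by linarith : (0:ℝ) ≤ x (k+1) - 2)
    have IH := ih hx'
    rw [hins, Finset.prod_insert hmem, Finset.sum_insert hmem]
    push_cast
    rw [pow_succ]
    nlinarith [key, key2, IH, hP]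
end

section
/- Let k ≥ 1 and let x_1,…,x_k be real numbers with x_j ≥ 4 for all j. Then (x_k + 1)·∏_{j=1}^{k−1}(x_j − 1) − (2 + Σ_{j=1}^k x_j) ≥ 5·3^{k−1} − 4k − 2. -/
open Finset

lemma prod_sub_one_ge_pow (m : ℕ) (x : ℕ → ℝ)
    (hx : ∀ j ∈ Finset.Icc 1 m, (4 : ℝ) ≤ x j) :
    (3 : ℝ) ^ m ≤ ∏ j ∈ Finset.Icc 1 m, (x j - 1) := by
  calc (3 : ℝ) ^ m = ∏ _j ∈ Finset.Icc 1 m, (3 : ℝ) := by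
        rw [Finset.prod_const, Nat.card_Icc]; norm_num
    _ ≤ ∏ j ∈ Finset.Icc 1 m, (x j - 1) := by
        apply Finset.prod_le_prod
        · intros; norm_num
        · intro j hj; have := hx j hj; linarith

lemma aux_key (m : ℕ) (x : ℕ → ℝ)
    (hx : ∀ j ∈ Finset.Icc 1 (m + 1), (4 : ℝ) ≤ x j) :
    5 * (3 : ℝ) ^ m - 4 * (m + 1 : ℕ) - 2 ≤
      (x (m + 1) + 1) * (∏ j ∈ Finset.Icc 1 m, (x j - 1))
        - (2 + ∑ j ∈ Finset.Icc 1 (m + 1), x j) := by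
  induction m with
  | zero =>
    simp only [pow_zero, Nat.cast_one, zero_add, Finset.Icc_self]
    rw [show Finset.Icc 1 0 = (∅ : Finset ℕ) by decide]
    simp
    linarith
  | succ n ih =>
    have hx' : ∀ j ∈ Finset.Icc 1 (n + 1), (4 : ℝ) ≤ x j := by
      intro j hj
      apply hx
      simp only [Finset.mem_Icc] at hj ⊢
      omega
    have IH := ih hx'
    have hP : (3 : ℝ) ^ n ≤ ∏ j ∈ Finset.Icc 1 n, (x j - 1) :=
      prod_sub_one_ge_pow n x (fun j hj => hx' j (by simp only [Finset.mem_Icc] at hj ⊢; omega))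
    have ha : (4 : ℝ) ≤ x (n + 1) := hx' (n + 1) (by simp)
    have hb : (4 : ℝ) ≤ x (n + 2) := hx (n + 2) (by simp)
    have h1 : (1 : ℝ) ≤ (3 : ℝ) ^ n := one_le_pow₀ (by norm_num)
    rw [Finset.prod_Icc_succ_top (by omega : 1 ≤ n + 1),
        Finset.sum_Icc_succ_top (by omega : 1 ≤ n + 1 + 1)]
    set P := ∏ j ∈ Finset.Icc 1 n, (x j - 1) with hPdef
    set S := ∑ j ∈ Finset.Icc 1 (n + 1), x j with hSdef
    push_cast
    push_cast at IH
    have hb2 : (4 : ℝ) ≤ x (n + 1 + 1) := hb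
    have h3 : (0 : ℝ) ≤ (3:ℝ) ^ n := by positivity
    rw [show ((3:ℝ) ^ (n+1)) = 3 ^ n * 3 from pow_succ 3 n]
    nlinarith [mul_nonneg (sub_nonneg.mpr hP) (by nlinarith : (0:ℝ) ≤ x (n+1+1) * (x (n+1) - 1) - 2),
      mul_nonneg (sub_nonneg.mpr h1) (by linarith : (0:ℝ) ≤ x (n+1+1) - 4),
      mul_nonneg (by linarith : (0:ℝ) ≤ x (n+1+1) - 4) (by linarith : (0:ℝ) ≤ x (n+1) - 4),
      mul_nonneg (sub_nonneg.mpr hP) (by linarith : (0:ℝ) ≤ x (n+1+1) + 1),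
      mul_nonneg h3 (by nlinarith : (0:ℝ) ≤ x (n+1+1) * x (n+1) - 2 * x (n+1+1) - 8)]

/-- If `k ≥ 1` and `x_1, …, x_k` are real numbers with `x_j ≥ 4` for all `j`, then
`(x_k + 1)·∏_{j=1}^{k−1}(x_j − 1) − (2 + Σ_{j=1}^k x_j) ≥ 5·3^{k−1} − 4k − 2`. -/
theorem mul_prod_sub_one_sub_sum_ge (k : ℕ) (hk : 1 ≤ k) (x : ℕ → ℝ)
    (hx : ∀ j ∈ Finset.Icc 1 k, (4 : ℝ) ≤ x j) :
    5 * (3 : ℝ) ^ (k - 1) - 4 * k - 2 ≤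
      (x k + 1) * (∏ j ∈ Finset.Icc 1 (k - 1), (x j - 1))
        - (2 + ∑ j ∈ Finset.Icc 1 k, x j) := by
  obtain ⟨m, rfl⟩ : ∃ m, k = m + 1 := ⟨k - 1, by omega⟩
  simpa using aux_key m x hx
end
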